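/- Let p be a prime, N ≥ 1, e ≥ 1, and let G be a smooth closed subgroup scheme of GL_N over ℤ_p of relative dimension d. Then rank_p(G(ℤ/p^eℤ)) ≤ d + rank_p(G(ℤ/pℤ)) if p is odd, and rank_2(G(ℤ/2^eℤ)) ≤ d + rank_2(G(ℤ/4ℤ)) if p = 2 and e ≥ 2. -/

import Mathlib

/-- The `p`-rank of a group: the largest `r` such that `(ℤ/pℤ)^r` embeds as a subgroup. -/
noncomputable def pRank (p : ℕ) (G : Type*) [Group G] : ℕ :=
  sSup {r : ℕ | ∃ H : Subgroup G, Nonempty (H ≃* (Fin r → Multiplicative (ZMod p)))}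


lemma aux_card (p t : ℕ) (hp : p.Prime) :
    Nat.card (Fin t → Multiplicative (ZMod p)) = p ^ t := by
  haveI : Fact p.Prime := ⟨hp⟩
  simp [Nat.card_pi, Nat.card_eq_fintype_card, ZMod.card]

lemma aux_class (p : ℕ) (hp : p.Prime) (E : Type*) [CommGroup E] [Finite E]
    (hE : ∀ x : E, x ^ p = 1) :
    ∃ t : ℕ, Nonempty (E ≃* (Fin t → Multiplicative (ZMod p))) := by
  haveI : Fact p.Prime := ⟨hp⟩
  haveI : NeZero p := ⟨hp.pos.ne'⟩
  letI mod : Module (ZMod p) (Additive E) := AddCommGroup.zmodModule (by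
    intro x
    exact congrArg Additive.ofMul (hE x.toMul))
  haveI hfin : Module.Finite (ZMod p) (Additive E) := Module.Finite.of_finite
  haveI hfree : Module.Free (ZMod p) (Additive E) := Module.Free.of_divisionRing _ _
  have b := @Module.finBasis (ZMod p) (Additive E) _ _ mod hfree _ hfin
  exact ⟨_, ⟨((MulEquiv.multiplicativeAdditive E).symm.trans
    (AddEquiv.toMultiplicative (b.equivFun.toAddEquiv))).trans
    (MulEquiv.piMultiplicative _)⟩⟩


section IntMatrix
variable {n : Type*} [Fintype n] [DecidableEq n]

lemma entry_dvd_mul {z w : ℤ} {M M' : Matrix n n ℤ}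
    (hM : ∀ a b, z ∣ M a b) (hM' : ∀ a b, w ∣ M' a b) :
    ∀ a b, z * w ∣ (M * M') a b := by
  intro a b
  rw [Matrix.mul_apply]
  exact Finset.dvd_sum fun c _ => mul_dvd_mul (hM a c) (hM' c b)

lemma entry_dvd_pow {z : ℤ} {M : Matrix n n ℤ} (hM : ∀ a b, z ∣ M a b) :
    ∀ i, ∀ a b, z ^ (i + 1) ∣ (M ^ (i + 1)) a b := by
  intro i
  induction i with
  | zero => simpa using hM
  | succ j ih =>
      intro a b
      rw [pow_succ M (j+1), pow_succ z (j+1)]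
      exact entry_dvd_mul ih hM a b

lemma int_step (p : ℕ) (hp : p.Prime) (k : ℕ) (hk1 : 1 ≤ k) (hk2 : p = 2 → 2 ≤ k)
    (Y : Matrix n n ℤ) (hY : ∀ a b, (p:ℤ)^k ∣ Y a b) :
    ∀ a b, (p:ℤ)^(k+2) ∣ ((1 + Y)^p - 1 - (p:ℤ) • Y) a b := by
  obtain ⟨q, hq⟩ : ∃ q, p = q + 2 := ⟨p - 2, by have := hp.two_le; omega⟩
  have expand := (Commute.one_right Y).add_pow p
  intro a b
  have key : ∀ i ∈ Finset.range (q + 1),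
      (p:ℤ)^(k+2) ∣ (Y ^ (i+2) * (1:Matrix n n ℤ) ^ (p - (i+2)) * ((p.choose (i+2) : ℕ) : Matrix n n ℤ)) a b := by
    intro i hi
    rw [one_pow, mul_one, ← Matrix.diagonal_natCast, Matrix.mul_diagonal]
    have hYpow : ((p:ℤ)^k) ^ (i + 2) ∣ (Y ^ (i + 2)) a b := by
      have := entry_dvd_pow hY (i + 1) a b
      simpa using this
    rcases eq_or_lt_of_le (show i + 2 ≤ p by simp at hi; omega) with hip | hip
    · -- i + 2 = p, choose = 1
      have hc : p.choose (i+2) = 1 := by rw [hip]; exact Nat.choose_self p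
      rw [hc]
      refine dvd_trans (pow_dvd_pow (p:ℤ) ?_) (by simpa [← pow_mul] using hYpow.mul_right 1)
      rcases Nat.eq_or_lt_of_le hp.two_le with h2 | h3
      · have hk2' := hk2 h2.symm
        have : p = 2 := h2.symm
        nlinarith [hip]
      · -- p ≥ 3, so i + 2 ≥ 3
        nlinarith [hip]
    · -- i + 2 < p, p divides choose
      obtain ⟨c, hc⟩ := hp.dvd_choose_self (by omega) hip
      rw [hc]
      push_cast
      calc (p:ℤ)^(k+2) ∣ ((p:ℤ)^k)^(i+2) * (p:ℤ) := by
              rw [← pow_mul, ← pow_succ]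
              exact pow_dvd_pow _ (by nlinarith)
        _ ∣ (Y ^ (i+2)) a b * (p:ℤ) := mul_dvd_mul hYpow dvd_rfl
        _ ∣ (Y ^ (i+2)) a b * ((p:ℤ) * (c:ℤ)) := by
              rw [← mul_assoc]; exact dvd_mul_right _ _
  have hsum : (1 + Y)^p - 1 - (p:ℤ) • Y =
      ∑ i ∈ Finset.range (q + 1),
        Y ^ (i+2) * (1:Matrix n n ℤ) ^ (p - (i+2)) * ((p.choose (i+2) : ℕ) : Matrix n n ℤ) := by
    rw [add_comm (1 : Matrix n n ℤ) Y, expand]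
    subst hq
    rw [Finset.sum_range_succ' _ (q+2), Finset.sum_range_succ' _ (q+1)]
    simp [Nat.choose_one_right]
    have hcomm : Y * ((q : Matrix n n ℤ) + 2) = ((q : Matrix n n ℤ) + 2) * Y := by
      have := (Nat.cast_commute (q + 2) Y).eq
      push_cast at this
      exact this.symm
    rw [hcomm]
    simp

  rw [hsum, Matrix.sum_apply]
  exact Finset.dvd_sum fun i hi => key i hi
end IntMatrix

section KeyGL
lemma key_gl (p : ℕ) (hp : p.Prime) {N : ℕ} {e c : ℕ} (hc1 : 1 ≤ c) (hc2 : p = 2 → 2 ≤ c)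
    (hce : c + 1 ≤ e) (h1 : p^c ∣ p^e) (h2 : p^(e-1) ∣ p^e)
    (x : GL (Fin N) (ZMod (p^e))) (hxp : x ^ p = 1)
    (hxc : Matrix.GeneralLinearGroup.map (ZMod.castHom h1 (ZMod (p^c))) x = 1) :
    Matrix.GeneralLinearGroup.map (ZMod.castHom h2 (ZMod (p^(e-1)))) x = 1 := by
  haveI : NeZero (p ^ e) := ⟨pow_ne_zero _ hp.pos.ne'⟩
  set M : Matrix (Fin N) (Fin N) (ZMod (p^e)) := (x : Matrix (Fin N) (Fin N) (ZMod (p^e))) with hM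
  set X : Matrix (Fin N) (Fin N) ℤ := fun a b => ((M a b).val : ℤ) with hX
  have hcast : ∀ (j : ℕ) (hj : p^j ∣ p^e), ∀ a b,
      ((X a b : ℤ) : ZMod (p^j)) = ZMod.castHom hj (ZMod (p^j)) (M a b) := by
    intro j hj a b
    have hMv : ((M a b).val : ZMod (p^e)) = M a b := by
      rw [ZMod.natCast_val, ZMod.cast_id]
    conv_rhs => rw [← hMv]
    rw [map_natCast]
    simp only [hX, Int.cast_natCast]
  have h1c : ∀ a b, (p:ℤ)^c ∣ (X - 1) a b := by
    intro a b
    have hE : (M.map (ZMod.castHom h1 (ZMod (p^c)))) = 1 := by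
      have := congrArg Units.val hxc
      simpa [Matrix.GeneralLinearGroup.map, RingHom.mapMatrix_apply] using this
    have hEab : ZMod.castHom h1 (ZMod (p^c)) (M a b) = (1 : Matrix (Fin N) (Fin N) (ZMod (p^c))) a b := by
      rw [← hE]; simp [Matrix.map_apply]
    have : (((X - 1) a b : ℤ) : ZMod (p^c)) = 0 := by
      rw [Matrix.sub_apply]
      push_cast
      rw [hcast c h1 a b, hEab]
      by_cases hab : a = b <;> simp [Matrix.one_apply, hab]
    have := (ZMod.intCast_zmod_eq_zero_iff_dvd _ _).mp this
    exact_mod_cast this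
  have hpe : ∀ a b, (p:ℤ)^e ∣ (X^p - 1) a b := by
    have hXmap : X.map (Int.castRingHom (ZMod (p^e))) = M := by
      ext a b
      show ((X a b : ℤ) : ZMod (p^e)) = M a b
      simp [hX, ZMod.natCast_val, ZMod.cast_id]
    intro a b
    have hMp : M ^ p = 1 := by
      have := congrArg Units.val hxp
      simpa using this
    have hzero : ((X^p - 1).map (Int.castRingHom (ZMod (p^e)))) = 0 := by
      have := (Int.castRingHom (ZMod (p^e))).mapMatrix.map_sub (X^p) 1
      rw [RingHom.mapMatrix_apply, RingHom.mapMatrix_apply, RingHom.mapMatrix_apply] at this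
      rw [this]
      have hh : ((X ^ p).map (Int.castRingHom (ZMod (p^e)))) = M ^ p := by
        have := (Int.castRingHom (ZMod (p^e))).mapMatrix.map_pow X p
        rw [RingHom.mapMatrix_apply, RingHom.mapMatrix_apply] at this
        rw [this, hXmap]
      rw [hh, hMp]
      simp
    have : (((X^p - 1) a b : ℤ) : ZMod (p^e)) = 0 := by
      have := congrFun (congrFun hzero a) b
      simpa [Matrix.map_apply] using this
    have := (ZMod.intCast_zmod_eq_zero_iff_dvd _ _).mp this
    exact_mod_cast this
  have main : ∀ j, c ≤ j → j ≤ e - 1 → ∀ a b, (p:ℤ)^j ∣ (X - 1) a b := by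
    intro j
    induction j with
    | zero => intro h0 _; omega
    | succ j ih =>
        intro hcj hje a b
        rcases eq_or_lt_of_le hcj with hc' | hc'
        · rw [← hc']; exact h1c a b
        · have hcj' : c ≤ j := by omega
          have ihj := ih hcj' (by omega)
          have hstep := int_step p hp j (le_trans hc1 hcj') (fun h => le_trans (hc2 h) hcj')
            (X - 1) ihj a b
          have h1plus : (1 : Matrix (Fin N) (Fin N) ℤ) + (X - 1) = X := by
            rw [add_comm, sub_add_cancel]
          have hXp' : (p:ℤ)^(j+2) ∣ (X^p - 1) a b :=
            dvd_trans (pow_dvd_pow _ (by omega)) (hpe a b)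
          have hPY : (p:ℤ)^(j+2) ∣ ((p:ℤ) • (X - 1)) a b := by
            have harr : (p:ℤ) • (X - 1) =
                (X^p - 1) - ((1 + (X - 1))^p - 1 - (p:ℤ) • (X - 1)) := by
              rw [h1plus]; exact (sub_sub_cancel _ _).symm
            rw [harr, Matrix.sub_apply]
            exact dvd_sub hXp' hstep
          have hmul : (p:ℤ) * ((p:ℤ)^(j+1)) ∣ (p:ℤ) * ((X - 1) a b) := by
            rw [← pow_succ']
            simpa [Matrix.smul_apply, smul_eq_mul] using hPY
          exact (mul_dvd_mul_iff_left
            (by exact_mod_cast hp.pos.ne' : (p:ℤ) ≠ 0)).mp hmul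
  have hfin := main (e-1) (by omega) le_rfl
  apply Units.ext
  have hgoal : (M.map (ZMod.castHom h2 (ZMod (p^(e-1))))) = 1 := by
    ext a b
    have hz : (((X - 1) a b : ℤ) : ZMod (p^(e-1))) = 0 := by
      rw [ZMod.intCast_zmod_eq_zero_iff_dvd]
      exact_mod_cast hfin a b
    rw [Matrix.sub_apply] at hz
    push_cast at hz
    rw [hcast (e-1) h2 a b] at hz
    rw [sub_eq_zero] at hz
    rw [Matrix.map_apply, hz]
    by_cases hab : a = b <;> simp [Matrix.one_apply, hab]
  simpa [Matrix.GeneralLinearGroup.map, RingHom.mapMatrix_apply] using hgoal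
end KeyGL

section GroupPart

lemma pRank_mem_le (p : ℕ) (hp : p.Prime) (Γ : Type*) [Group Γ] [Finite Γ] :
    BddAbove {r : ℕ | ∃ H : Subgroup Γ, Nonempty (H ≃* (Fin r → Multiplicative (ZMod p)))} := by
  haveI : NeZero p := ⟨hp.pos.ne'⟩
  refine ⟨Nat.card Γ, fun r hr => ?_⟩
  obtain ⟨H, ⟨ψ⟩⟩ := hr
  have hcard : Nat.card H = p ^ r := by
    rw [Nat.card_congr ψ.toEquiv, aux_card p r hp]
  have h1 : p ^ r ≤ Nat.card Γ := by
    rw [← hcard]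
    exact Nat.card_le_card_of_injective _ H.subtype_injective
  have h2 : r < p ^ r := Nat.lt_pow_self hp.one_lt
  omega

lemma le_pRank (p : ℕ) (hp : p.Prime) (Γ : Type*) [Group Γ] [Finite Γ] (r : ℕ)
    (H : Subgroup Γ) (hH : Nonempty (H ≃* (Fin r → Multiplicative (ZMod p)))) :
    r ≤ pRank p Γ :=
  le_csSup (pRank_mem_le p hp Γ) ⟨H, hH⟩

lemma pi_pow_p (p r : ℕ) (x : Fin r → Multiplicative (ZMod p)) : x ^ p = 1 := by
  funext i
  have : (x ^ p) i = x i ^ p := rfl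
  rw [this]
  apply Multiplicative.toAdd.injective
  simp [toAdd_pow, nsmul_eq_mul, ZMod.natCast_self]

lemma bot_iso (p : ℕ) (Γ : Type*) [Group Γ] :
    Nonempty ((⊥ : Subgroup Γ) ≃* (Fin 0 → Multiplicative (ZMod p))) := by
  refine ⟨{ toEquiv := Equiv.ofUnique _ _, map_mul' := fun _ _ => Subsingleton.elim _ _ }⟩

end GroupPart



set_option maxHeartbeats 1000000 in
lemma main_aux (p N e d b : ℕ) (hp : p.Prime) (hb1 : 1 ≤ b) (hb2 : p = 2 → 2 ≤ b) (hbe : b ≤ e)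
    (G : ∀ j : ℕ, Subgroup (GL (Fin N) (ZMod (p ^ j))))
    (hcompat : ∀ j : ℕ, 1 ≤ j →
      Subgroup.map (Matrix.GeneralLinearGroup.map (n := Fin N)
        (ZMod.castHom (pow_dvd_pow p (Nat.le_succ j)) (ZMod (p ^ j)))) (G (j + 1)) = G j)
    (hker : ∀ j : ℕ, 1 ≤ j →
      Nonempty ((↥(G (j + 1) ⊓ MonoidHom.ker (Matrix.GeneralLinearGroup.map (n := Fin N)
          (ZMod.castHom (pow_dvd_pow p (Nat.le_succ j)) (ZMod (p ^ j))))))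
        ≃* (Fin d → Multiplicative (ZMod p)))) :
    pRank p (G e) ≤ d + pRank p (G b) := by
  haveI : NeZero p := ⟨hp.pos.ne'⟩
  rcases eq_or_lt_of_le hbe with heb | heb
  · subst heb; exact Nat.le_add_left _ _
  obtain ⟨e', rfl⟩ : ∃ e', e = e' + 1 := ⟨e - 1, by omega⟩
  have hbe' : b ≤ e' := by omega
  have he'1 : 1 ≤ e' := by omega
  haveI : NeZero (p ^ (e' + 1)) := ⟨pow_ne_zero _ hp.pos.ne'⟩
  haveI : NeZero (p ^ b) := ⟨pow_ne_zero _ hp.pos.ne'⟩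
  -- reduction maps land in G b
  have hπG : ∀ j (hj : b ≤ j), ∀ g : GL (Fin N) (ZMod (p ^ j)), g ∈ G j →
      Matrix.GeneralLinearGroup.map (n := Fin N)
        (ZMod.castHom (pow_dvd_pow p hj) (ZMod (p ^ b))) g ∈ G b := by
    intro j
    induction j with
    | zero => intro hj; omega
    | succ j ih =>
        intro hj g hg
        rcases eq_or_lt_of_le hj with h | h
        · subst h
          have heq : Matrix.GeneralLinearGroup.map (n := Fin N)
              (ZMod.castHom (pow_dvd_pow p hj) (ZMod (p ^ (j + 1)))) g = g := by
            have hcast : ZMod.castHom (pow_dvd_pow p hj) (ZMod (p ^ (j + 1))) =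
                RingHom.id (ZMod (p ^ (j + 1))) := ZMod.castHom_self
            rw [hcast, Matrix.GeneralLinearGroup.map_id]
            rfl
          rw [heq]
          exact hg
        · have hbj : b ≤ j := by omega
          have h1j : 1 ≤ j := by omega
          have hg1 : Matrix.GeneralLinearGroup.map (n := Fin N)
              (ZMod.castHom (pow_dvd_pow p (Nat.le_succ j)) (ZMod (p ^ j))) g ∈ G j := by
            rw [← hcompat j h1j]
            exact Subgroup.mem_map_of_mem _ hg
          have hihg := ih hbj _ hg1
          have hcomp : Matrix.GeneralLinearGroup.map (n := Fin N)
              (ZMod.castHom (pow_dvd_pow p hbj) (ZMod (p ^ b)))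
              (Matrix.GeneralLinearGroup.map (n := Fin N)
                (ZMod.castHom (pow_dvd_pow p (Nat.le_succ j)) (ZMod (p ^ j))) g) =
              Matrix.GeneralLinearGroup.map (n := Fin N)
                (ZMod.castHom (pow_dvd_pow p hj) (ZMod (p ^ b))) g := by
            rw [← Matrix.GeneralLinearGroup.map_comp_apply, ← Matrix.GeneralLinearGroup.map_comp,
              ZMod.castHom_comp]
          rw [← hcomp]
          exact hihg
  refine csSup_le ⟨0, ⊥, bot_iso p _⟩ ?_
  rintro r ⟨A, ⟨φ⟩⟩
  -- all elements of A have order dividing p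
  have hApow : ∀ y : ↥A, y ^ p = 1 := fun y => φ.injective (by rw [map_pow, map_one, pi_pow_p])
  -- the reduction homomorphism restricted to A, valued in G b
  set π : GL (Fin N) (ZMod (p ^ (e' + 1))) →* GL (Fin N) (ZMod (p ^ b)) :=
    Matrix.GeneralLinearGroup.map (n := Fin N)
      (ZMod.castHom (pow_dvd_pow p (by omega : b ≤ e' + 1)) (ZMod (p ^ b))) with hπ
  set F : ↥A →* ↥(G b) := MonoidHom.codRestrict
    (π.comp ((G (e' + 1)).subtype.comp A.subtype)) (G b)
    (fun y => hπG (e' + 1) (by omega) _ y.1.2) with hF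
  letI : CommGroup ↥A :=
    { (inferInstance : Group ↥A) with
      mul_comm := fun x y => φ.injective (by rw [map_mul, map_mul, mul_comm]) }
  letI : CommGroup ↥F.ker :=
    { (inferInstance : Group ↥F.ker) with
      mul_comm := fun x y => Subtype.ext (mul_comm (x : ↥A) (y : ↥A)) }
  letI : CommGroup ↥F.range :=
    { (inferInstance : Group ↥F.range) with
      mul_comm := by
        rintro ⟨_, u, rfl⟩ ⟨_, v, rfl⟩
        refine Subtype.ext ?_
        show F u * F v = F v * F u
        rw [← map_mul, ← map_mul, mul_comm] }
  have hKexp : ∀ y : ↥F.ker, y ^ p = 1 := by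
    intro y
    have h0 : ((y : ↥A)) ^ p = 1 := hApow _
    refine Subtype.ext ?_
    rw [SubgroupClass.coe_pow]
    exact h0
  have hRexp : ∀ y : ↥F.range, y ^ p = 1 := by
    rintro ⟨_, u, rfl⟩
    refine Subtype.ext ?_
    rw [SubgroupClass.coe_pow]
    show F u ^ p = 1
    rw [← map_pow, hApow, map_one]
  obtain ⟨s, ⟨ψs⟩⟩ := aux_class p hp ↥F.ker hKexp
  obtain ⟨t, ⟨ψt⟩⟩ := aux_class p hp ↥F.range hRexp
  have hcardK : Nat.card ↥F.ker = p ^ s := by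
    rw [Nat.card_congr ψs.toEquiv, aux_card p s hp]
  have hcardR : Nat.card ↥F.range = p ^ t := by
    rw [Nat.card_congr ψt.toEquiv, aux_card p t hp]
  have hcardA : Nat.card ↥A = p ^ r := by
    rw [Nat.card_congr φ.toEquiv, aux_card p r hp]
  -- r = s + t
  have hquot : Nat.card ↥A = Nat.card (↥A ⧸ F.ker) * Nat.card ↥F.ker :=
    Subgroup.card_eq_card_quotient_mul_card_subgroup F.ker
  have hqr : Nat.card (↥A ⧸ F.ker) = p ^ t := by
    rw [Nat.card_congr (QuotientGroup.quotientKerEquivRange F).toEquiv, hcardR]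
  have hrst : r = t + s := by
    have hpow : (p : ℕ) ^ r = p ^ (t + s) := by
      rw [pow_add, ← hqr, ← hcardK, ← hcardA, hquot]
    exact Nat.pow_right_injective hp.two_le hpow
  -- s ≤ d
  have hsd : s ≤ d := by
    set L := G (e' + 1) ⊓ MonoidHom.ker (Matrix.GeneralLinearGroup.map (n := Fin N)
        (ZMod.castHom (pow_dvd_pow p (Nat.le_succ e')) (ZMod (p ^ e')))) with hL
    have hmem : ∀ y : ↥F.ker,
        (((y : ↥A) : ↥(G (e' + 1))) : GL (Fin N) (ZMod (p ^ (e' + 1)))) ∈ L := by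
      intro y
      refine Subgroup.mem_inf.mpr ⟨((y : ↥A) : ↥(G (e' + 1))).2, MonoidHom.mem_ker.mpr ?_⟩
      have h0 : ((y : ↥A) : ↥(G (e' + 1))) ^ p = 1 := by
        have := congrArg (Subtype.val : ↥A → ↥(G (e' + 1))) (hApow (y : ↥A))
        rw [SubgroupClass.coe_pow] at this
        exact this
      have hxp : (((y : ↥A) : ↥(G (e' + 1))) : GL (Fin N) (ZMod (p ^ (e' + 1)))) ^ p = 1 := by
        have := congrArg (Subtype.val : ↥(G (e' + 1)) → GL (Fin N) (ZMod (p ^ (e' + 1)))) h0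
        rw [SubgroupClass.coe_pow] at this
        exact this
      have hxc : π (((y : ↥A) : ↥(G (e' + 1))) : GL (Fin N) (ZMod (p ^ (e' + 1)))) = 1 := by
        have hy : F (y : ↥A) = 1 := y.2
        have := congrArg (Subtype.val : ↥(G b) → GL (Fin N) (ZMod (p ^ b))) hy
        exact this
      exact key_gl p hp (e := e' + 1) (c := b) hb1 hb2 (by omega)
        (pow_dvd_pow p (by omega : b ≤ e' + 1)) (pow_dvd_pow p (Nat.le_succ e'))
        _ hxp hxc
    have hinj : Function.Injective (fun y : ↥F.ker => (⟨_, hmem y⟩ : ↥L)) := by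
      intro y z h
      have hval := congrArg Subtype.val h
      exact Subtype.ext (Subtype.ext (Subtype.ext hval))
    have hcardL : Nat.card ↥L = p ^ d := by
      obtain ⟨ψ⟩ := hker e' he'1
      rw [Nat.card_congr ψ.toEquiv, aux_card p d hp]
    have hle := Nat.card_le_card_of_injective _ hinj
    rw [hcardK, hcardL] at hle
    exact (Nat.pow_le_pow_iff_right hp.one_lt).mp hle
  -- t ≤ pRank p (G b)
  have htp : t ≤ pRank p ↥(G b) := le_pRank p hp _ t F.range ⟨ψt⟩
  omega


/-- Let `p` be a prime, `N ≥ 1`, `e ≥ 1`, and `G` a smooth closed subgroup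
scheme of `GL_N` over `ℤ_p` of relative dimension `d`. Then
`rank_p(G(ℤ/p^eℤ)) ≤ d + rank_p(G(ℤ/pℤ))` if `p` is odd, and
`rank_2(G(ℤ/2^eℤ)) ≤ d + rank_2(G(ℤ/4ℤ))` if `p = 2` and `e ≥ 2`.

The group scheme `G` is abstracted through its groups of points: a compatible family
of subgroups `G j ≤ GL_N(ℤ/pʲℤ)` such that reduction maps `G (j+1)` onto `G j`
(smoothness/Hensel), and such that the kernel of each reduction `G (j+1) → G j` is
isomorphic to the Lie algebra `𝔤(𝔽_p) ≅ (ℤ/pℤ)^d` (smoothness). -/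
theorem stmt_19 (p N e d : ℕ) (hp : p.Prime) (hN : 1 ≤ N) (he : 1 ≤ e)
    (G : ∀ j : ℕ, Subgroup (GL (Fin N) (ZMod (p ^ j))))
    (hcompat : ∀ j : ℕ, 1 ≤ j →
      Subgroup.map (Matrix.GeneralLinearGroup.map (n := Fin N)
        (ZMod.castHom (pow_dvd_pow p (Nat.le_succ j)) (ZMod (p ^ j)))) (G (j + 1)) = G j)
    (hker : ∀ j : ℕ, 1 ≤ j →
      Nonempty ((↥(G (j + 1) ⊓ MonoidHom.ker (Matrix.GeneralLinearGroup.map (n := Fin N)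
          (ZMod.castHom (pow_dvd_pow p (Nat.le_succ j)) (ZMod (p ^ j))))))
        ≃* (Fin d → Multiplicative (ZMod p)))) :
    (Odd p → pRank p (G e) ≤ d + pRank p (G 1)) ∧
    (p = 2 → 2 ≤ e → pRank 2 (G e) ≤ d + pRank 2 (G 2)) := by
  constructor
  · intro hodd
    refine main_aux p N e d 1 hp le_rfl ?_ he G hcompat hker
    intro h2
    rw [h2] at hodd
    exact absurd hodd (by decide)
  · intro h2 he2
    subst h2
    exact main_aux 2 N e d 2 hp one_le_two (fun _ => le_rfl) he2 G hcompat hker
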